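/- Let γ ∈ (1/2,1) and c₀ = 1/(2π). Suppose v : (ℝ² \ {0}) × [0,∞) → [0,∞] is measurable, v₀(ξ) = v(ξ,0), and v satisfies for all ξ ≠ 0 and t ≥ 0: v(ξ,t) = v₀(ξ) e^{−|ξ|^{2γ}t} + (c₀/2) ∫_0^t ∫_{ℝ²} |ξ| e^{−|ξ|^{2γ}s} v(η,t−s) v(ξ−η,t−s) |sin(θ(ξ,η) − θ(ξ,ξ−η))| dη ds. Suppose there exists a measurable set A ⊆ ℝ² with positive Lebesgue measure such that v₀(ξ) > 0 for almost every ξ ∈ A ∪ (−A). Then v(ξ,t) > 0 for every ξ ∈ ℝ² \ {0} and every t > 0. -/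

import Mathlib

open MeasureTheory Set ENNReal

/-- The mild scalar integral equation satisfied by the expected magnitude of the 2D
fractional Navier–Stokes solution process (with `c₀ = 1/(2π)`), in `[0,∞]`-valued form. -/
def Solves2D (γ : ℝ) (v : EuclideanSpace ℝ (Fin 2) → ℝ → ℝ≥0∞) : Prop :=
  ∀ ξ : EuclideanSpace ℝ (Fin 2), ξ ≠ 0 → ∀ t : ℝ, 0 ≤ t →
    v ξ t = ENNReal.ofReal (Real.exp (-(‖ξ‖ ^ (2*γ)) * t)) * v ξ 0 +
      ∫⁻ s in Set.Ioc (0:ℝ) t, ∫⁻ η : EuclideanSpace ℝ (Fin 2),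
        ENNReal.ofReal ((1/(2*Real.pi))/2 * ‖ξ‖ * Real.exp (-(‖ξ‖ ^ (2*γ)) * s)
            * |Real.sin (InnerProductGeometry.angle ξ η
                - InnerProductGeometry.angle ξ (ξ - η))|)
          * (v η (t - s) * v (ξ - η) (t - s))

/-!
Positive initial data stay positive for all time through the linear term of the equation. By
Steinhaus' theorem `A ∩ (ξ + A)` has positive measure for all small `ξ`, and for `η` in it
`η ∈ A` and `ξ - η ∈ -A`, so the collision integral at `ξ` sees a set of positive measure on
which `v η` and `v (ξ - η)` are both positive. The angular weight vanishes only on two lines,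
since `sin (θ(ξ,η) - θ(ξ,ξ-η)) ‖ξ‖² ‖η‖ ‖ξ - η‖ = |ω(ξ,η)| (‖ξ‖² - 2⟪ξ,η⟫)` with `ω` the area
form. Positivity for `‖ξ‖ < R` then spreads to `‖ξ‖ < 2R` by writing `ξ = η + (ξ - η)` with `η`
close to `ξ / 2`.
-/

open InnerProductGeometry Module
open scoped Topology

local notation "E2" => EuclideanSpace ℝ (Fin 2)

theorem ae_apply_ne_of_ne_zero {E : Type*} [NormedAddCommGroup E] [NormedSpace ℝ E]
    [FiniteDimensional ℝ E] [MeasurableSpace E] [BorelSpace E] (μ : Measure E)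
    [μ.IsAddHaarMeasure] {f : E →ₗ[ℝ] ℝ} (hf : f ≠ 0) (c : ℝ) : ∀ᵐ y ∂μ, f y ≠ c := by
  obtain ⟨w, hw⟩ : ∃ w, f w ≠ 0 := by simpa [LinearMap.ext_iff] using hf
  set x₀ : E := (c / f w) • w
  have hx₀ : f x₀ = c := by simp [x₀, div_mul_cancel₀ _ hw]
  have hlevel : {y | f y = c} ⊆ AffineSubspace.mk' x₀ (LinearMap.ker f) := fun y hy => by
    simp_all [AffineSubspace.mem_mk']
  rw [ae_iff]
  simp only [ne_eq, not_not]
  refine measure_mono_null hlevel (Measure.addHaar_affineSubspace μ _ fun htop => ?_)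
  have : x₀ + w ∈ AffineSubspace.mk' x₀ (LinearMap.ker f) := htop ▸ AffineSubspace.mem_top ℝ E _
  simp [AffineSubspace.mem_mk', hw] at this

section Angle

variable {E : Type*} [NormedAddCommGroup E] [InnerProductSpace ℝ E]

theorem Orientation.sin_angle_mul_norm_mul_norm_eq_abs_areaForm [Fact (finrank ℝ E = 2)]
    (o : Orientation ℝ E (Fin 2)) (x y : E) :
    Real.sin (angle x y) * (‖x‖ * ‖y‖) = |o.areaForm x y| := by
  rw [sin_angle_mul_norm_mul_norm, ← Real.sqrt_sq_eq_abs, real_inner_self_eq_norm_sq,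
    real_inner_self_eq_norm_sq]
  congr 1
  linarith [o.inner_sq_add_areaForm_sq x y]

theorem Orientation.sin_angle_sub_angle_sub_mul_norm [Fact (finrank ℝ E = 2)]
    (o : Orientation ℝ E (Fin 2)) (x y : E) :
    Real.sin (angle x y - angle x (x - y)) * ((‖x‖ * ‖y‖) * (‖x‖ * ‖x - y‖))
      = |o.areaForm x y| * (‖x‖ ^ 2 - 2 * inner ℝ x y) := by
  have hsin := o.sin_angle_mul_norm_mul_norm_eq_abs_areaForm x y
  have hsin' := o.sin_angle_mul_norm_mul_norm_eq_abs_areaForm x (x - y)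
  have hcos := cos_angle_mul_norm_mul_norm x y
  have hcos' := cos_angle_mul_norm_mul_norm x (x - y)
  rw [map_sub, o.areaForm_apply_self, zero_sub, abs_neg] at hsin'
  rw [inner_sub_right, real_inner_self_eq_norm_sq] at hcos'
  rw [Real.sin_sub]
  linear_combination (‖x‖ * ‖x - y‖ * Real.cos (angle x (x - y))) * hsin
    + |o.areaForm x y| * hcos' - (‖x‖ * ‖x - y‖ * Real.sin (angle x (x - y))) * hcos
    - inner ℝ x y * hsin'

theorem ae_sin_angle_sub_angle_sub_ne_zero [FiniteDimensional ℝ E] [MeasurableSpace E]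
    [BorelSpace E] (hE : finrank ℝ E = 2) (μ : Measure E) [μ.IsAddHaarMeasure] {x : E}
    (hx : x ≠ 0) : ∀ᵐ y ∂μ, Real.sin (angle x y - angle x (x - y)) ≠ 0 := by
  have : Fact (finrank ℝ E = 2) := ⟨hE⟩
  let o : Orientation ℝ E (Fin 2) := (finBasisOfFinrankEq ℝ E hE).orientation
  have hω : o.areaForm x ≠ 0 := fun h => by
    simpa [hx, o.areaForm_rightAngleRotation_right] using
      LinearMap.congr_fun h (o.rightAngleRotation x)
  have hinner : innerₛₗ ℝ x ≠ 0 := fun h => by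
    simpa [hx] using LinearMap.congr_fun h x
  filter_upwards [ae_apply_ne_of_ne_zero μ hω 0,
    ae_apply_ne_of_ne_zero μ hinner (‖x‖ ^ 2 / 2)] with y hωy hxy hsin
  have := o.sin_angle_sub_angle_sub_mul_norm x y
  rw [hsin, zero_mul, eq_comm, mul_eq_zero, abs_eq_zero, sub_eq_zero] at this
  rw [innerₛₗ_apply_apply] at hxy
  rcases this with h | h
  · exact hωy h
  · exact hxy (by linarith)

end Angle

open scoped Pointwise in
theorem eventually_nhds_zero_measure_inter_vadd_pos {G : Type*} [AddGroup G]
    [TopologicalSpace G] [IsTopologicalAddGroup G] [LocallyCompactSpace G] [T2Space G]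
    [MeasurableSpace G] [BorelSpace G] (μ : Measure G) [μ.IsAddHaarMeasure] [μ.InnerRegular]
    {A : Set G} (hA : MeasurableSet A) (hApos : 0 < μ A) :
    ∀ᶠ g : G in 𝓝 0, 0 < μ (A ∩ (g +ᵥ A)) := by
  obtain ⟨K, hKA, hK, hKpos⟩ := hA.exists_lt_isCompact hApos
  filter_upwards [eventually_nhds_zero_measure_vadd_sdiff_lt hK hK.isClosed hKpos.ne' (μ := μ)]
    with g hg
  have hcover : g +ᵥ K ⊆ (A ∩ (g +ᵥ A)) ∪ ((g +ᵥ K) \ K) := fun y hy => by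
    by_cases hyK : y ∈ K
    · exact Or.inl ⟨hKA hyK, vadd_set_mono hKA hy⟩
    · exact Or.inr ⟨hy, hyK⟩
  rw [pos_iff_ne_zero]
  intro h0
  have : μ K < μ K := calc
    μ K = μ (g +ᵥ K) := (measure_vadd μ g K).symm
    _ ≤ μ (A ∩ (g +ᵥ A)) + μ ((g +ᵥ K) \ K) :=
      (measure_mono hcover).trans (measure_union_le _ _)
    _ < μ K := by rwa [h0, zero_add]
  exact this.false

theorem lintegral_Ioc_lintegral_ne_zero {α : Type*} [MeasurableSpace α] {μ : Measure α}
    [SFinite μ] {F : ℝ → α → ℝ≥0∞} (hF : Measurable (Function.uncurry F)) {t : ℝ} (ht : 0 < t)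
    (hpos : ∀ s ∈ Ioo 0 t, ∃ᵐ x ∂μ, F s x ≠ 0) : ∫⁻ s in Ioc 0 t, ∫⁻ x, F s x ∂μ ≠ 0 := by
  intro h0
  have hIoo : ∫⁻ s in Ioo 0 t, ∫⁻ x, F s x ∂μ = 0 :=
    le_antisymm (h0 ▸ lintegral_mono_set Ioo_subset_Ioc_self) zero_le
  rw [lintegral_eq_zero_iff hF.lintegral_prod_right] at hIoo
  have : (ae (volume.restrict (Ioo 0 t))).NeBot := ae_restrict_neBot.2 (by simp [ht])
  obtain ⟨s, hs0, hs⟩ := (hIoo.and (ae_restrict_mem measurableSet_Ioo)).exists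
  rw [Pi.zero_apply, lintegral_eq_zero_iff hF.of_uncurry_left] at hs0
  obtain ⟨x, hx, hx0⟩ := ((hpos s hs).and_eventually hs0).exists
  exact hx hx0

def PositiveBelow (v : E2 → ℝ → ℝ≥0∞) (R : ℝ) : Prop :=
  ∀ ξ : E2, ξ ≠ 0 → ‖ξ‖ < R → ∀ t : ℝ, 0 < t → 0 < v ξ t

namespace Solves2D

variable {γ : ℝ} {v : E2 → ℝ → ℝ≥0∞}

theorem pos_of_pos_zero (heq : Solves2D γ v) {ξ : E2} (hξ : ξ ≠ 0) (hv : 0 < v ξ 0)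
    {τ : ℝ} (hτ : 0 ≤ τ) : 0 < v ξ τ := by
  rw [heq ξ hξ τ hτ]
  exact (ENNReal.mul_pos (ENNReal.ofReal_pos.2 (Real.exp_pos _)).ne' hv.ne').trans_le le_self_add

theorem pos_of_frequently (heq : Solves2D γ v) (hmeas : Measurable (Function.uncurry v))
    {ξ : E2} (hξ : ξ ≠ 0) {t : ℝ} (ht : 0 < t)
    (hfreq : ∃ᵐ η : E2, ∀ τ ∈ Ioo 0 t, 0 < v η τ ∧ 0 < v (ξ - η) τ) : 0 < v ξ t := by
  rw [heq ξ hξ t ht.le]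
  refine (pos_iff_ne_zero.2 (lintegral_Ioc_lintegral_ne_zero ?_ ht fun s hs => ?_)).trans_le
    le_add_self
  · have hv₁ : Measurable fun p : ℝ × E2 => v p.2 (t - p.1) :=
      hmeas.comp (measurable_snd.prodMk (measurable_const.sub measurable_fst))
    have hv₂ : Measurable fun p : ℝ × E2 => v (ξ - p.2) (t - p.1) :=
      hmeas.comp ((measurable_const.sub measurable_snd).prodMk
        (measurable_const.sub measurable_fst))
    unfold angle Function.uncurry
    fun_prop
  · refine (hfreq.and_eventually
      (ae_sin_angle_sub_angle_sub_ne_zero finrank_euclideanSpace_fin volume hξ)).mono ?_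
    rintro η ⟨hv, hsin⟩
    obtain ⟨hvη, hvξη⟩ := hv (t - s) ⟨by linarith [hs.2], by linarith [hs.1]⟩
    refine mul_ne_zero (ENNReal.ofReal_pos.2 ?_).ne' (mul_ne_zero hvη.ne' hvξη.ne')
    exact mul_pos (mul_pos (mul_pos (by positivity) (norm_pos_iff.2 hξ)) (Real.exp_pos _))
      (abs_pos.2 hsin)

theorem exists_positiveBelow (heq : Solves2D γ v) (hmeas : Measurable (Function.uncurry v))
    {A : Set E2} (hA : MeasurableSet A) (hApos : 0 < volume A)
    (hv₀ : ∀ᵐ ξ : E2, ξ ∈ A ∪ (-A) → 0 < v ξ 0) : ∃ r > 0, PositiveBelow v r := by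
  obtain ⟨r, hr, hsteinhaus⟩ := Metric.eventually_nhds_iff.1
    (eventually_nhds_zero_measure_inter_vadd_pos volume hA hApos)
  refine ⟨r, hr, fun ξ hξ hξr t ht => heq.pos_of_frequently hmeas hξ ht ?_⟩
  have hgood : ∀ᵐ η : E2, η ≠ 0 ∧ (η ∈ A ∪ -A → 0 < v η 0) := (volume.ae_ne 0).and hv₀
  have hgood' := (Measure.measurePreserving_sub_left volume ξ).quasiMeasurePreserving.ae hgood
  refine ((frequently_ae_mem_iff.2 (hsteinhaus (by simpa using hξr)).ne').and_eventually
    (hgood.and hgood')).mono ?_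
  rintro η ⟨⟨hηA, hηξA⟩, ⟨hη0, hvη⟩, hξη0, hvξη⟩ τ hτ
  have hξηA : ξ - η ∈ -A := by
    rw [mem_vadd_set_iff_neg_vadd_mem] at hηξA
    simpa [Set.mem_neg, neg_sub, sub_eq_neg_add] using hηξA
  exact ⟨heq.pos_of_pos_zero hη0 (hvη (Or.inl hηA)) hτ.1.le,
    heq.pos_of_pos_zero hξη0 (hvξη (Or.inr hξηA)) hτ.1.le⟩

theorem positiveBelow_two_mul (heq : Solves2D γ v) (hmeas : Measurable (Function.uncurry v))
    {R : ℝ} (hR : PositiveBelow v R) : PositiveBelow v (2 * R) := by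
  intro ξ hξ hξR t ht
  refine heq.pos_of_frequently hmeas hξ ht ?_
  have hball : ∃ᵐ η : E2, η ∈ Metric.ball ((2⁻¹ : ℝ) • ξ) (R - ‖ξ‖ / 2) :=
    frequently_ae_mem_iff.2 (Metric.measure_ball_pos volume _ (by linarith)).ne'
  refine (hball.and_eventually ((volume.ae_ne 0).and
    ((Measure.measurePreserving_sub_left volume ξ).quasiMeasurePreserving.ae
      (volume.ae_ne 0)))).mono ?_
  rintro η ⟨hη, hη0, hξη0⟩ τ hτ
  rw [Metric.mem_ball, dist_eq_norm] at hη
  have hhalf : ‖(2⁻¹ : ℝ) • ξ‖ = ‖ξ‖ / 2 := by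
    rw [norm_smul, Real.norm_of_nonneg (by norm_num)]
    ring
  have hη_lt : ‖η‖ < R := calc
    ‖η‖ = ‖(η - (2⁻¹ : ℝ) • ξ) + (2⁻¹ : ℝ) • ξ‖ := by rw [sub_add_cancel]
    _ ≤ ‖η - (2⁻¹ : ℝ) • ξ‖ + ‖(2⁻¹ : ℝ) • ξ‖ := norm_add_le _ _
    _ < R := by linarith
  have hξη_lt : ‖ξ - η‖ < R := calc
    ‖ξ - η‖ = ‖(2⁻¹ : ℝ) • ξ - (η - (2⁻¹ : ℝ) • ξ)‖ := by congr 1; module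
    _ ≤ ‖(2⁻¹ : ℝ) • ξ‖ + ‖η - (2⁻¹ : ℝ) • ξ‖ := norm_sub_le _ _
    _ < R := by linarith
  exact ⟨hR η hη0 hη_lt τ hτ.1, hR (ξ - η) hξη0 hξη_lt τ hτ.1⟩

end Solves2D

theorem stmt14_general (γ : ℝ)
    (v : EuclideanSpace ℝ (Fin 2) → ℝ → ℝ≥0∞)
    (hmeas : Measurable (Function.uncurry v))
    (heq : Solves2D γ v)
    (A : Set (EuclideanSpace ℝ (Fin 2))) (hA : MeasurableSet A) (hApos : 0 < volume A)
    (hv₀ : ∀ᵐ ξ : EuclideanSpace ℝ (Fin 2), ξ ∈ A ∪ (-A) → 0 < v ξ 0) :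
    ∀ ξ : EuclideanSpace ℝ (Fin 2), ξ ≠ 0 → ∀ t : ℝ, 0 < t → 0 < v ξ t := by
  obtain ⟨r, hr, hbase⟩ := heq.exists_positiveBelow hmeas hA hApos hv₀
  have hgrow : ∀ n : ℕ, PositiveBelow v (2 ^ n * r) := by
    intro n
    induction n with
    | zero => simpa using hbase
    | succ n ih => simpa [pow_succ, mul_comm, mul_left_comm] using
        heq.positiveBelow_two_mul hmeas ih
  intro ξ hξ t ht
  obtain ⟨n, hn⟩ := pow_unbounded_of_one_lt (‖ξ‖ / r) one_lt_two
  exact hgrow n ξ hξ (by rwa [div_lt_iff₀ hr] at hn) t ht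

theorem stmt14 (γ : ℝ) (hγ : γ ∈ Set.Ioo (1/2 : ℝ) 1)
    (v : EuclideanSpace ℝ (Fin 2) → ℝ → ℝ≥0∞)
    (hmeas : Measurable (Function.uncurry v))
    (heq : Solves2D γ v)
    (A : Set (EuclideanSpace ℝ (Fin 2))) (hA : MeasurableSet A) (hApos : 0 < volume A)
    (hv₀ : ∀ᵐ ξ : EuclideanSpace ℝ (Fin 2), ξ ∈ A ∪ (-A) → 0 < v ξ 0) :
    ∀ ξ : EuclideanSpace ℝ (Fin 2), ξ ≠ 0 → ∀ t : ℝ, 0 < t → 0 < v ξ t :=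
  stmt14_general γ v hmeas heq A hA hApos hv₀
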